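/- Let S₁, …, Sₙ be mutually independent random variables with values in finite sets, and let T₁, …, Tₙ be any random variables on the same probability space with values in finite sets. Then I((S₁,…,Sₙ); (T₁,…,Tₙ)) ≥ Σᵢ I(Sᵢ; Tᵢ). -/

import Mathlib

open Finset Real

noncomputable def pmfOf {Ω α : Type*} [Fintype Ω] [DecidableEq α]
    (μ : Ω → ℝ) (X : Ω → α) (x : α) : ℝ :=
  ∑ ω : Ω, if X ω = x then μ ω else 0

noncomputable def entropy {Ω α : Type*} [Fintype Ω] [Fintype α] [DecidableEq α]
    (μ : Ω → ℝ) (X : Ω → α) : ℝ :=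
  ∑ x : α, -(pmfOf μ X x * Real.logb 2 (pmfOf μ X x))

noncomputable def mutualInfo {Ω α β : Type*} [Fintype Ω] [Fintype α] [Fintype β]
    [DecidableEq α] [DecidableEq β] (μ : Ω → ℝ) (X : Ω → α) (Y : Ω → β) : ℝ :=
  entropy μ X + entropy μ Y - entropy μ (fun ω => (X ω, Y ω))

noncomputable def condMutualInfo {Ω α β γ : Type*} [Fintype Ω] [Fintype α] [Fintype β] [Fintype γ]
    [DecidableEq α] [DecidableEq β] [DecidableEq γ]
    (μ : Ω → ℝ) (X : Ω → α) (Y : Ω → β) (Z : Ω → γ) : ℝ :=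
  entropy μ (fun ω => (X ω, Z ω)) + entropy μ (fun ω => (Y ω, Z ω))
    - entropy μ (fun ω => (X ω, Y ω, Z ω)) - entropy μ Z

noncomputable def binEnt (t : ℝ) : ℝ :=
  -(t * Real.logb 2 t) - (1 - t) * Real.logb 2 (1 - t)

/-! Let `p` be the joint law of `(S, T)` and `q(s, t) = P(T = t) ∏ᵢ P(Sᵢ = sᵢ | Tᵢ = tᵢ)` (`condProdPmf`),
a sub-probability (the factor is `0 / 0 = 0` when `P(Tᵢ = tᵢ) = 0`) that is positive wherever `p` is.
Gibbs' inequality `∑ p log q ≤ ∑ p log p` then reads `H(S | T) ≤ ∑ᵢ H(Sᵢ | Tᵢ)`, for arbitrary `S`.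
Independence gives `H(S) = ∑ᵢ H(Sᵢ)`, and subtracting yields `∑ᵢ I(Sᵢ; Tᵢ) ≤ I(S; T)`. -/

section Pmf

variable {Ω : Type*} [Fintype Ω] {μ : Ω → ℝ}

lemma pmfOf_nonneg (hμ : ∀ ω, 0 ≤ μ ω) {α : Type*} [DecidableEq α] (X : Ω → α) (x : α) :
    0 ≤ pmfOf μ X x :=
  sum_nonneg fun ω _ => by split <;> simp [hμ ω]

lemma le_pmfOf_apply (hμ : ∀ ω, 0 ≤ μ ω) {α : Type*} [DecidableEq α] (X : Ω → α) (ω : Ω) :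
    μ ω ≤ pmfOf μ X (X ω) := by
  simpa [pmfOf] using single_le_sum (f := fun ω' => if X ω' = X ω then μ ω' else 0)
    (fun ω' _ => by split <;> simp [hμ ω']) (mem_univ ω)

lemma pmfOf_apply_pos (hμ : ∀ ω, 0 ≤ μ ω) {α : Type*} [DecidableEq α] (X : Ω → α) {ω : Ω}
    (hω : 0 < μ ω) : 0 < pmfOf μ X (X ω) :=
  hω.trans_le (le_pmfOf_apply hμ X ω)

lemma exists_pos_of_pmfOf_pos {α : Type*} [DecidableEq α] {X : Ω → α} {x : α}
    (hx : 0 < pmfOf μ X x) : ∃ ω, X ω = x ∧ 0 < μ ω := by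
  by_contra! h
  exact hx.not_ge (sum_nonpos fun ω _ => by split_ifs with hω <;> simp [h ω, hω])

lemma sum_pmfOf_mul {α : Type*} [Fintype α] [DecidableEq α] (X : Ω → α) (g : α → ℝ) :
    ∑ x, pmfOf μ X x * g x = ∑ ω, μ ω * g (X ω) := by
  simp only [pmfOf, sum_mul, ite_mul, zero_mul]
  rw [sum_comm]
  simp

lemma sum_pmfOf (hμ1 : ∑ ω, μ ω = 1) {α : Type*} [Fintype α] [DecidableEq α] (X : Ω → α) :
    ∑ x, pmfOf μ X x = 1 := by
  simpa [hμ1] using sum_pmfOf_mul (μ := μ) X fun _ => 1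

lemma sum_pmfOf_pair_left {α β : Type*} [Fintype α] [DecidableEq α] [DecidableEq β]
    (X : Ω → α) (Y : Ω → β) (y : β) :
    ∑ x, pmfOf μ (fun ω => (X ω, Y ω)) (x, y) = pmfOf μ Y y := by
  simp only [pmfOf]
  rw [sum_comm]
  simp [Prod.ext_iff, ite_and]

lemma entropy_eq_neg_sum_mul_logb {α : Type*} [Fintype α] [DecidableEq α] (X : Ω → α) :
    entropy μ X = -∑ ω, μ ω * logb 2 (pmfOf μ X (X ω)) := by
  rw [← sum_pmfOf_mul X fun x => logb 2 (pmfOf μ X x)]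
  simp [entropy]

lemma sum_mul_congr_of_ne_zero {f g : Ω → ℝ} (hfg : ∀ ω, μ ω ≠ 0 → f ω = g ω) :
    ∑ ω, μ ω * f ω = ∑ ω, μ ω * g ω :=
  sum_congr rfl fun ω _ => by
    by_cases h : μ ω = 0
    · simp [h]
    · rw [hfg ω h]

end Pmf

lemma sum_mul_logb_le_sum_mul_logb_self {ι : Type*} [Fintype ι] (p q : ι → ℝ)
    (hp : ∀ x, 0 ≤ p x) (hq : ∀ x, 0 ≤ q x) (hp1 : ∑ x, p x = 1) (hq1 : ∑ x, q x ≤ 1)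
    (hpq : ∀ x, 0 < p x → 0 < q x) :
    ∑ x, p x * logb 2 (q x) ≤ ∑ x, p x * logb 2 (p x) := by
  have hlog2 : 0 < log 2 := log_pos one_lt_two
  have hterm : ∀ x, p x * log (q x) - p x * log (p x) ≤ q x - p x := by
    intro x
    rcases (hp x).eq_or_lt with h | h
    · simp [← h, hq x]
    · have hlog := log_le_sub_one_of_pos (div_pos (hpq x h) h)
      rw [log_div (hpq x h).ne' h.ne'] at hlog
      have := mul_le_mul_of_nonneg_left hlog h.le
      rwa [mul_sub, mul_sub, mul_div_cancel₀ _ h.ne', mul_one] at this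
  have hsum : ∑ x, p x * log (q x) - ∑ x, p x * log (p x) ≤ 0 := by
    have := sum_le_sum fun x (_ : x ∈ univ) => hterm x
    rw [sum_sub_distrib, sum_sub_distrib, hp1] at this
    linarith
  simp only [logb, mul_div_assoc', ← sum_div]
  exact div_le_div_of_nonneg_right (by linarith) hlog2.le

section CondProd

variable {Ω ι : Type*} [Fintype Ω] [Fintype ι] {μ : Ω → ℝ}
  {α β : ι → Type*} [∀ i, DecidableEq (α i)] [∀ i, DecidableEq (β i)]

noncomputable def condProdPmf (μ : Ω → ℝ) (S : ∀ i, Ω → α i) (T : ∀ i, Ω → β i)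
    (x : (∀ i, α i) × (∀ i, β i)) : ℝ :=
  pmfOf μ (fun ω i => T i ω) x.2 *
    ∏ i, pmfOf μ (fun ω => (S i ω, T i ω)) (x.1 i, x.2 i) / pmfOf μ (T i) (x.2 i)

variable (S : ∀ i, Ω → α i) (T : ∀ i, Ω → β i)

lemma condProdPmf_nonneg (hμ : ∀ ω, 0 ≤ μ ω) (x : (∀ i, α i) × (∀ i, β i)) :
    0 ≤ condProdPmf μ S T x :=
  mul_nonneg (pmfOf_nonneg hμ _ _) <|
    prod_nonneg fun _ _ => div_nonneg (pmfOf_nonneg hμ _ _) (pmfOf_nonneg hμ _ _)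

lemma condProdPmf_pos (hμ : ∀ ω, 0 ≤ μ ω) {ω : Ω} (hω : 0 < μ ω) :
    0 < condProdPmf μ S T (fun i => S i ω, fun i => T i ω) :=
  mul_pos (pmfOf_apply_pos hμ _ hω) <| prod_pos fun i _ =>
    div_pos (pmfOf_apply_pos hμ (fun ω => (S i ω, T i ω)) hω) (pmfOf_apply_pos hμ (T i) hω)

lemma logb_condProdPmf (hμ : ∀ ω, 0 ≤ μ ω) {ω : Ω} (hω : 0 < μ ω) :
    logb 2 (condProdPmf μ S T (fun i => S i ω, fun i => T i ω)) =
      logb 2 (pmfOf μ (fun ω i => T i ω) (fun i => T i ω)) +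
        ∑ i, (logb 2 (pmfOf μ (fun ω => (S i ω, T i ω)) (S i ω, T i ω)) -
          logb 2 (pmfOf μ (T i) (T i ω))) := by
  have hST i := (pmfOf_apply_pos hμ (fun ω => (S i ω, T i ω)) hω).ne'
  have hT i := (pmfOf_apply_pos hμ (T i) hω).ne'
  have hquot i : pmfOf μ (fun ω => (S i ω, T i ω)) (S i ω, T i ω) / pmfOf μ (T i) (T i ω) ≠ 0 :=
    div_ne_zero (hST i) (hT i)
  rw [condProdPmf, logb_mul (pmfOf_apply_pos hμ (fun ω i => T i ω) hω).ne'
    (prod_ne_zero_iff.mpr fun i _ => hquot i), logb_prod _ _ fun i _ => hquot i]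
  simp only [logb_div (hST _) (hT _)]

variable [DecidableEq ι] [∀ i, Fintype (α i)] [∀ i, Fintype (β i)]

lemma sum_condProdPmf_le_one (hμ : ∀ ω, 0 ≤ μ ω) (hμ1 : ∑ ω, μ ω = 1) :
    ∑ x, condProdPmf μ S T x ≤ 1 := by
  have hcond : ∀ t : ∀ i, β i, ∑ s : ∀ i, α i,
      ∏ i, pmfOf μ (fun ω => (S i ω, T i ω)) (s i, t i) / pmfOf μ (T i) (t i) ≤ 1 := by
    intro t
    rw [← Fintype.prod_sum fun i a =>
      pmfOf μ (fun ω => (S i ω, T i ω)) (a, t i) / pmfOf μ (T i) (t i)]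
    refine prod_le_one (fun i _ => sum_nonneg fun _ _ =>
      div_nonneg (pmfOf_nonneg hμ _ _) (pmfOf_nonneg hμ _ _)) fun i _ => ?_
    rw [← sum_div, sum_pmfOf_pair_left]
    exact div_self_le_one _
  calc ∑ x, condProdPmf μ S T x
      = ∑ t : ∀ i, β i, pmfOf μ (fun ω i => T i ω) t * ∑ s : ∀ i, α i,
          ∏ i, pmfOf μ (fun ω => (S i ω, T i ω)) (s i, t i) / pmfOf μ (T i) (t i) := by
        rw [Fintype.sum_prod_type_right]
        simp only [condProdPmf, mul_sum]
    _ ≤ ∑ t : ∀ i, β i, pmfOf μ (fun ω i => T i ω) t :=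
        sum_le_sum fun t _ => mul_le_of_le_one_right (pmfOf_nonneg hμ _ _) (hcond t)
    _ = 1 := sum_pmfOf hμ1 _

lemma sum_mul_logb_condProdPmf (hμ : ∀ ω, 0 ≤ μ ω) :
    ∑ ω, μ ω * logb 2 (condProdPmf μ S T (fun i => S i ω, fun i => T i ω)) =
      -entropy μ (fun ω i => T i ω) -
        ∑ i, (entropy μ (fun ω => (S i ω, T i ω)) - entropy μ (T i)) := by
  rw [sum_mul_congr_of_ne_zero fun ω hω =>
    logb_condProdPmf S T hμ ((hμ ω).lt_of_ne' hω)]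
  simp only [mul_add, mul_sum, mul_sub, sum_add_distrib, sum_sub_distrib,
    sum_neg_distrib, entropy_eq_neg_sum_mul_logb]
  rw [sum_comm (s := (univ : Finset Ω)), sum_comm (s := (univ : Finset Ω))]
  ring

lemma entropy_pi_pair_le (hμ : ∀ ω, 0 ≤ μ ω) (hμ1 : ∑ ω, μ ω = 1) :
    entropy μ (fun ω => (fun i => S i ω, fun i => T i ω)) ≤
      entropy μ (fun ω i => T i ω) +
        ∑ i, (entropy μ (fun ω => (S i ω, T i ω)) - entropy μ (T i)) := by
  have hpq (x) (hx : 0 < pmfOf μ (fun ω => (fun i => S i ω, fun i => T i ω)) x) :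
      0 < condProdPmf μ S T x := by
    obtain ⟨ω, rfl, hω⟩ := exists_pos_of_pmfOf_pos hx
    exact condProdPmf_pos S T hμ hω
  have hgibbs := sum_mul_logb_le_sum_mul_logb_self _ _ (pmfOf_nonneg hμ _)
    (condProdPmf_nonneg S T hμ) (sum_pmfOf hμ1 _) (sum_condProdPmf_le_one S T hμ hμ1) hpq
  rw [sum_pmfOf_mul, sum_pmfOf_mul, sum_mul_logb_condProdPmf S T hμ] at hgibbs
  linarith [entropy_eq_neg_sum_mul_logb (μ := μ) fun ω => (fun i => S i ω, fun i => T i ω)]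

end CondProd

lemma entropy_pi_eq_sum_of_indep {Ω ι : Type*} [Fintype Ω] [Fintype ι] [DecidableEq ι]
    {μ : Ω → ℝ} {α : ι → Type*} [∀ i, Fintype (α i)] [∀ i, DecidableEq (α i)]
    (hμ : ∀ ω, 0 ≤ μ ω) (S : ∀ i, Ω → α i)
    (hIndep : ∀ s : ∀ i, α i, pmfOf μ (fun ω i => S i ω) s = ∏ i, pmfOf μ (S i) (s i)) :
    entropy μ (fun ω i => S i ω) = ∑ i, entropy μ (S i) := by
  rw [entropy_eq_neg_sum_mul_logb, sum_mul_congr_of_ne_zero fun ω hω => by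
    rw [hIndep, logb_prod _ _ fun i _ => (pmfOf_apply_pos hμ (S i) ((hμ ω).lt_of_ne' hω)).ne']]
  simp only [mul_sum, entropy_eq_neg_sum_mul_logb, ← sum_neg_distrib]
  exact sum_comm

theorem stmt5 {Ω : Type*} [Fintype Ω] {n : ℕ}
    {α β : Fin n → Type*} [∀ i, Fintype (α i)] [∀ i, DecidableEq (α i)]
    [∀ i, Fintype (β i)] [∀ i, DecidableEq (β i)]
    (μ : Ω → ℝ) (hμ : ∀ ω, 0 ≤ μ ω) (hμ1 : ∑ ω : Ω, μ ω = 1)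
    (S : ∀ i, Ω → α i) (T : ∀ i, Ω → β i)
    (hIndep : ∀ s : ∀ i, α i,
      pmfOf μ (fun ω => (fun i => S i ω)) s = ∏ i : Fin n, pmfOf μ (S i) (s i)) :
    ∑ i : Fin n, mutualInfo μ (S i) (T i)
      ≤ mutualInfo μ (fun ω => (fun i => S i ω)) (fun ω => (fun i => T i ω)) := by
  have hcond := entropy_pi_pair_le S T hμ hμ1
  rw [sum_sub_distrib] at hcond
  simp only [mutualInfo, sum_sub_distrib, sum_add_distrib]
  linarith [entropy_pi_eq_sum_of_indep hμ S hIndep]
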